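/- Suppose A ∈ ℝ^{d×n} and B ∈ ℝ^{d×m} with d ≤ min(n, m), and the spectral norms satisfy ‖A‖_σ ≤ α and ‖B‖_σ ≤ α. Then ‖A‖_* + ‖B‖_* − ‖[A, B]‖_* ≤ (2 − √2)·α·d. -/

import Mathlib

open Matrix

noncomputable def singularValues {d : ℕ} {n : Type*} [Fintype n]
    (M : Matrix (Fin d) n ℝ) : Fin d → ℝ :=
  fun i => Real.sqrt ((Matrix.isHermitian_mul_conjTranspose_self M).eigenvalues i)

noncomputable def nuclearNorm {d : ℕ} {n : Type*} [Fintype n]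
    (M : Matrix (Fin d) n ℝ) : ℝ :=
  ∑ i, singularValues M i

noncomputable def spectralNorm' {d : ℕ} {n : Type*} [Fintype n]
    (M : Matrix (Fin d) n ℝ) : ℝ :=
  ⨆ i, singularValues M i

/-!
With `P = A Aᴴ` and `Q = B Bᴴ` we have `‖A‖_* = tr √P`, `‖B‖_* = tr √Q` and, since
`[A, B] [A, B]ᴴ = P + Q`, `‖[A, B]‖_* = tr √(P + Q)`. From `(√P + √Q)² + (√P - √Q)² = 2 (P + Q)`
we get `(√P + √Q)² ≤ (√2 √(P + Q))²`, and squares of this kind can be compared through traces after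
diagonalising the right-hand side, so `‖A‖_* + ‖B‖_* ≤ √2 ‖[A, B]‖_*`. Hence the left-hand side is
at most `(1 - 1/√2) (‖A‖_* + ‖B‖_*) ≤ (1 - 1/√2) · 2αd`.
-/

namespace Matrix

variable {ι : Type*} [Fintype ι]

lemma IsHermitian.sq_apply_le_mul_self_apply {X : Matrix ι ι ℝ} (hX : X.IsHermitian) (i : ι) :
    X i i ^ 2 ≤ (X * X) i i :=
  calc X i i ^ 2 ≤ ∑ j, X i j ^ 2 :=
        Finset.single_le_sum (f := fun j => X i j ^ 2) (fun j _ => sq_nonneg _) (Finset.mem_univ i)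
    _ = (X * X) i i := by simp [mul_apply, sq, ← hX.apply i]

lemma IsHermitian.trace_le_sum_of_mul_self_le_diagonal [DecidableEq ι] {X : Matrix ι ι ℝ}
    (hX : X.IsHermitian) {μ : ι → ℝ} (hμ : 0 ≤ μ)
    (h : (diagonal μ * diagonal μ - X * X).PosSemidef) : X.trace ≤ ∑ i, μ i := by
  refine Finset.sum_le_sum fun i _ => abs_le_of_sq_le_sq' ?_ (hμ i) |>.2
  rw [diag_apply]
  have := h.diag_nonneg (i := i)
  simp only [sub_apply, diagonal_mul_diagonal, diagonal_apply_eq] at this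
  nlinarith [hX.sq_apply_le_mul_self_apply i]

lemma IsHermitian.trace_le_trace_of_mul_self_le [DecidableEq ι] {X Y : Matrix ι ι ℝ}
    (hX : X.IsHermitian) (hY : Y.PosSemidef) (h : (Y * Y - X * X).PosSemidef) :
    X.trace ≤ Y.trace := by
  set U : Matrix ι ι ℝ := (hY.1.eigenvectorUnitary : Matrix ι ι ℝ)
  have hUU : U * star U = 1 := Unitary.coe_mul_star_self _
  have conj_mul : ∀ Z W : Matrix ι ι ℝ, star U * Z * U * (star U * W * U) = star U * (Z * W) * U :=
    fun Z W => by simp only [Matrix.mul_assoc, ← Matrix.mul_assoc U, hUU, Matrix.one_mul]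
  have trace_conj : ∀ Z : Matrix ι ι ℝ, (star U * Z * U).trace = Z.trace := fun Z => by
    rw [trace_mul_cycle, hUU, Matrix.one_mul]
  have hdiag : star U * Y * U = diagonal hY.1.eigenvalues := by
    simpa [Unitary.conjStarAlgAut_apply] using hY.1.conjStarAlgAut_star_eigenvectorUnitary
  have hX' : (star U * X * U).IsHermitian := by
    simpa [star_eq_conjTranspose, Matrix.mul_assoc] using isHermitian_conjTranspose_mul_mul U hX
  have hsq : (diagonal hY.1.eigenvalues * diagonal hY.1.eigenvalues
      - star U * X * U * (star U * X * U)).PosSemidef := by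
    rw [← hdiag, conj_mul, conj_mul, ← Matrix.sub_mul, ← Matrix.mul_sub, star_eq_conjTranspose]
    exact h.conjTranspose_mul_mul_same U
  calc X.trace = (star U * X * U).trace := (trace_conj X).symm
    _ ≤ ∑ i, hY.1.eigenvalues i :=
      hX'.trace_le_sum_of_mul_self_le_diagonal (fun i => hY.eigenvalues_nonneg i) hsq
    _ = Y.trace := by rw [← trace_conj Y, hdiag, trace_diagonal]

open scoped MatrixOrder

lemma PosSemidef.trace_sqrt [DecidableEq ι] {P : Matrix ι ι ℝ} (hP : P.PosSemidef) :
    (CFC.sqrt P).trace = ∑ i, √(hP.1.eigenvalues i) := by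
  rw [CFC.sqrt_eq_cfc, cfc_nnreal_eq_real _ P, hP.1.cfc_eq, IsHermitian.cfc,
    Unitary.conjStarAlgAut_apply, trace_mul_cycle, Unitary.coe_star_mul_self, Matrix.one_mul,
    trace_diagonal]
  simp [max_eq_left (hP.eigenvalues_nonneg _)]

lemma PosSemidef.trace_sqrt_add_trace_sqrt_le [DecidableEq ι] {P Q : Matrix ι ι ℝ}
    (hP : P.PosSemidef) (hQ : Q.PosSemidef) :
    (CFC.sqrt P).trace + (CFC.sqrt Q).trace ≤ √2 * (CFC.sqrt (P + Q)).trace := by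
  set S := CFC.sqrt P
  set T := CFC.sqrt Q
  set R := CFC.sqrt (P + Q)
  have hS : S.IsHermitian := (CFC.sqrt_nonneg P).posSemidef.1
  have hT : T.IsHermitian := (CFC.sqrt_nonneg Q).posSemidef.1
  have hR : (√2 • R).PosSemidef := (CFC.sqrt_nonneg (P + Q)).posSemidef.smul (Real.sqrt_nonneg 2)
  have hsq : √2 • R * (√2 • R) - (S + T) * (S + T) = (S - T)ᴴ * (S - T) := by
    rw [smul_mul_smul_comm, Real.mul_self_sqrt zero_le_two,
      CFC.sqrt_mul_sqrt_self _ (hP.add hQ).nonneg, conjTranspose_sub, hS.eq, hT.eq]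
    have hSS : S * S = P := CFC.sqrt_mul_sqrt_self P hP.nonneg
    have hTT : T * T = Q := CFC.sqrt_mul_sqrt_self Q hQ.nonneg
    rw [← hSS, ← hTT, two_smul]
    noncomm_ring
  have := (hS.add hT).trace_le_trace_of_mul_self_le hR (hsq ▸ posSemidef_conjTranspose_mul_self _)
  rwa [trace_add, trace_smul, smul_eq_mul] at this

end Matrix

lemma Matrix.fromCols_mul_conjTranspose_fromCols {R ι n m : Type*} [Fintype n] [Fintype m]
    [Semiring R] [Star R] (A : Matrix ι n R) (B : Matrix ι m R) :
    fromCols A B * (fromCols A B)ᴴ = A * Aᴴ + B * Bᴴ := by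
  rw [conjTranspose_fromCols_eq_fromRows_conjTranspose, fromCols_mul_fromRows]

section NuclearNorm

variable {d : ℕ}

open scoped MatrixOrder

lemma nuclearNorm_eq_trace_sqrt {n : Type*} [Fintype n] (M : Matrix (Fin d) n ℝ) :
    nuclearNorm M = (CFC.sqrt (M * Mᴴ)).trace :=
  (posSemidef_self_mul_conjTranspose M).trace_sqrt.symm

lemma nuclearNorm_add_nuclearNorm_le_sqrt_two_mul_nuclearNorm_fromCols {n m : Type*} [Fintype n]
    [Fintype m] (A : Matrix (Fin d) n ℝ) (B : Matrix (Fin d) m ℝ) :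
    nuclearNorm A + nuclearNorm B ≤ √2 * nuclearNorm (fromCols A B) := by
  simp only [nuclearNorm_eq_trace_sqrt, fromCols_mul_conjTranspose_fromCols]
  exact (posSemidef_self_mul_conjTranspose A).trace_sqrt_add_trace_sqrt_le
    (posSemidef_self_mul_conjTranspose B)

lemma nuclearNorm_le_of_spectralNorm'_le {n : Type*} [Fintype n] {M : Matrix (Fin d) n ℝ} {α : ℝ}
    (h : spectralNorm' M ≤ α) : nuclearNorm M ≤ α * d := by
  calc nuclearNorm M ≤ ∑ _i : Fin d, α :=
        Finset.sum_le_sum fun i _ => (le_ciSup (Set.finite_range _).bddAbove i).trans h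
    _ = α * d := by simp [mul_comm]

end NuclearNorm

theorem nuclearNorm_sum_sub_concat_le_general {d n m : ℕ} (α : ℝ)
    (A : Matrix (Fin d) (Fin n) ℝ) (B : Matrix (Fin d) (Fin m) ℝ)
    (hA : spectralNorm' A ≤ α) (hB : spectralNorm' B ≤ α) :
    nuclearNorm A + nuclearNorm B - nuclearNorm (Matrix.fromCols A B)
      ≤ (2 - Real.sqrt 2) * α * d := by
  have hsum := nuclearNorm_add_nuclearNorm_le_sqrt_two_mul_nuclearNorm_fromCols A B
  have hA' := nuclearNorm_le_of_spectralNorm'_le hA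
  have hB' := nuclearNorm_le_of_spectralNorm'_le hB
  have hsqrt2 : √2 * √2 = 2 := Real.mul_self_sqrt zero_le_two
  have one_le_sqrt_two : 1 ≤ √2 := Real.one_le_sqrt.mpr one_le_two
  have key : √2 * (nuclearNorm A + nuclearNorm B - nuclearNorm (fromCols A B))
      ≤ √2 * ((2 - √2) * α * d) := by
    linear_combination hsum + α * d * hsqrt2
      + mul_le_mul_of_nonneg_left (add_le_add hA' hB') (sub_nonneg.mpr one_le_sqrt_two)
  exact le_of_mul_le_mul_left key (by positivity)

theorem nuclearNorm_sum_sub_concat_le {d n m : ℕ} (α : ℝ) (hα : 0 < α)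
    (hdn : d ≤ n) (hdm : d ≤ m)
    (A : Matrix (Fin d) (Fin n) ℝ) (B : Matrix (Fin d) (Fin m) ℝ)
    (hA : spectralNorm' A ≤ α) (hB : spectralNorm' B ≤ α) :
    nuclearNorm A + nuclearNorm B - nuclearNorm (Matrix.fromCols A B)
      ≤ (2 - Real.sqrt 2) * α * d :=
  nuclearNorm_sum_sub_concat_le_general α A B hA hB
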